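/- arXiv:2009.14128 — 2 statements merged into one kernel-verified Lean document; each statement's English description precedes it below -/
import Mathlib

section
/- Let k be a field and (A,A⁺) a local Huber pair where A is a k-algebra with maximal ideal m. Let f and g be elements of A with v(f) · v(g) ≤ 1. Then the element f • D(g) of Ω_{A/k} lies in the submodule N of logarithmic differentials. -/
/-!
If `v g ≤ 1` and `v f ≤ 1`, then `f • D g` is an `A⁺`-multiple of the generator `D g`.
Otherwise one of `f, g` has value `> 1`, hence does not lie in `m = supp v` and is a unit.
For a unit `u`, at least one of `u, u⁻¹` lies in `A⁺`, and `u⁻¹ • D u = -(u • D u⁻¹)`,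
so `u⁻¹ • D u ∈ N`; thus `f • D g = (f g) • (g⁻¹ • D g) ∈ N` when `g` is a unit, and
`f • D g = D (f g) - (g f) • (f⁻¹ • D f) ∈ N` when `f` is.
-/

/-- The set of basic logarithmic differentials in `Ω_{A/k}` attached to a local Huber
pair `(A, A⁺)` (with `A⁺ = v.integer = {a : v a ≤ 1}`): the differentials `D a` for
`a ∈ A⁺` together with the logarithmic differentials `g⁻¹ • D g` for `g ∈ A⁺` a unit
of `A`. -/
def logDiffSet (k : Type) [Field k] {Γ₀ : Type} [LinearOrderedCommGroupWithZero Γ₀]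
    {A : Type} [CommRing A] [Algebra k A] (v : Valuation A Γ₀) : Set (Ω[A⁄k]) :=
  {ω | ∃ a : A, v a ≤ 1 ∧ ω = KaehlerDifferential.D k A a} ∪
  {ω | ∃ g : A, v g ≤ 1 ∧ ∃ h : IsUnit g,
    ω = (↑h.unit⁻¹ : A) • KaehlerDifferential.D k A g}

/-- `N`, the `A⁺`-submodule of `Ω_{A/k}` (with scalars restricted along `A⁺ ⊆ A`)
generated by the basic logarithmic differentials; it is the image in `Ω_{A/k}` of the
module of logarithmic differentials of `A⁺` with its total log structure. -/
noncomputable def logDiff (k : Type) [Field k] {Γ₀ : Type}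
    [LinearOrderedCommGroupWithZero Γ₀] {A : Type} [CommRing A] [Algebra k A]
    (v : Valuation A Γ₀) : Submodule v.integer (Ω[A⁄k]) :=
  Submodule.span v.integer (logDiffSet k v)

open KaehlerDifferential

section LogDiff

variable (k : Type) [Field k] {Γ₀ : Type} [LinearOrderedCommGroupWithZero Γ₀]
  {A : Type} [CommRing A] [Algebra k A] (v : Valuation A Γ₀)

theorem smul_mem_logDiff {a : A} (ha : v a ≤ 1) {ω : Ω[A⁄k]} (hω : ω ∈ logDiff k v) :
    a • ω ∈ logDiff k v :=
  (logDiff k v).smul_mem (⟨a, ha⟩ : v.integer) hω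

theorem D_mem_logDiff {a : A} (ha : v a ≤ 1) : D k A a ∈ logDiff k v :=
  Submodule.subset_span (Or.inl ⟨a, ha, rfl⟩)

theorem inv_smul_D_mem_logDiff_of_le_one (u : Aˣ) (hu : v u ≤ 1) :
    (↑u⁻¹ : A) • D k A u ∈ logDiff k v :=
  Submodule.subset_span (Or.inr ⟨u, hu, u.isUnit, by rw [IsUnit.unit_of_val_units]⟩)

theorem inv_smul_D_units_eq_neg (u : Aˣ) :
    (↑u⁻¹ : A) • D k A u = -((u : A) • D k A (↑u⁻¹ : A)) := by
  rw [(D k A).leibniz_of_mul_eq_one u.mul_inv, neg_smul, smul_neg, smul_smul, pow_two,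
    ← mul_assoc, u.inv_mul, one_mul]

theorem inv_smul_D_mem_logDiff (u : Aˣ) : (↑u⁻¹ : A) • D k A u ∈ logDiff k v := by
  rcases le_or_gt (v u) 1 with hu | hu
  · exact inv_smul_D_mem_logDiff_of_le_one k v u hu
  · have hu' : v (u⁻¹ : Aˣ) ≤ 1 := by
      rw [map_units_inv]
      exact inv_le_one_of_one_le₀ hu.le
    rw [inv_smul_D_units_eq_neg]
    simpa only [inv_inv] using neg_mem (inv_smul_D_mem_logDiff_of_le_one k v u⁻¹ hu')

theorem smul_D_units_mem_logDiff {f : A} (u : Aˣ) (hfu : v (f * u) ≤ 1) :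
    f • D k A u ∈ logDiff k v := by
  have h := smul_mem_logDiff k v hfu (inv_smul_D_mem_logDiff k v u)
  rwa [smul_smul, mul_assoc, u.mul_inv, mul_one] at h

end LogDiff

theorem isUnit_of_valuation_ne_zero {Γ₀ : Type} [LinearOrderedCommGroupWithZero Γ₀]
    {A : Type} [CommRing A] [IsLocalRing A] {v : Valuation A Γ₀}
    (hsupp : v.supp = IsLocalRing.maximalIdeal A) {a : A} (ha : v a ≠ 0) : IsUnit a := by
  by_contra h
  exact ha ((v.mem_supp_iff a).mp (hsupp ▸ (IsLocalRing.mem_maximalIdeal a).mpr h))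

/-- For a local Huber pair `(A, A⁺)` over a field `k` and elements `f, g ∈ A`
with `v f * v g ≤ 1`, the differential `f • D g ∈ Ω_{A/k}` lies in the submodule
`N` of logarithmic differentials. -/
theorem smul_d_mem_logDiff
    (k : Type) [Field k] (Γ₀ : Type) [LinearOrderedCommGroupWithZero Γ₀]
    (A : Type) [CommRing A] [IsLocalRing A] [Algebra k A]
    (v : Valuation A Γ₀)
    (hsupp : v.supp = IsLocalRing.maximalIdeal A)
    (f g : A) (hfg : v f * v g ≤ 1) :
    f • KaehlerDifferential.D k A g ∈ logDiff k v := by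
  have isUnit_of_one_lt {a : A} (ha : 1 < v a) : IsUnit a :=
    isUnit_of_valuation_ne_zero hsupp (zero_lt_one.trans ha).ne'
  rcases le_or_gt (v g) 1 with hg | hg
  · rcases le_or_gt (v f) 1 with hf | hf
    · exact smul_mem_logDiff k v hf (D_mem_logDiff k v hg)
    · obtain ⟨u, rfl⟩ := isUnit_of_one_lt hf
      have hgDu : g • D k A u ∈ logDiff k v :=
        smul_D_units_mem_logDiff k v u (by rwa [v.map_mul, mul_comm])
      have hD : D k A (u * g) ∈ logDiff k v := D_mem_logDiff k v (by rwa [v.map_mul])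
      rw [(D k A).leibniz] at hD
      simpa only [add_sub_cancel_right] using sub_mem hD hgDu
  · obtain ⟨u, rfl⟩ := isUnit_of_one_lt hg
    exact smul_D_units_mem_logDiff k v u (by rwa [v.map_mul])
end

section
/- Let k be a field and (A,A⁺) a local Huber pair where A is a k-algebra with maximal ideal m. Let b ∈ A⁺ and suppose ω ∈ Ω_{A/k} lies in b • N, where N is the submodule of logarithmic differentials. Then there exists a finite family (f_i, g_i)_{i∈I} of pairs of elements of A such that ω = Σ_i f_i • D(g_i) and v(f_i) · v(g_i) ≤ v(b) for every i ∈ I. (This is the inequality |ω|_Ω ≤ |ω|_ad between the Kähler seminorm and the adic seminorm on logarithmic differentials.) -/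
open KaehlerDifferential

section KaehlerBound

variable {k : Type} [Field k] {Γ₀ : Type} [LinearOrderedCommGroupWithZero Γ₀]
  {A : Type} [CommRing A] [Algebra k A] (v : Valuation A Γ₀)

/-- The Kähler seminorm `|ω|_Ω` is at most `r`. -/
def IsKaehlerBounded (r : Γ₀) (ω : Ω[A⁄k]) : Prop :=
  ∃ (n : ℕ) (f g : Fin n → A), ω = ∑ i, f i • D k A (g i) ∧ ∀ i, v (f i) * v (g i) ≤ r

variable {v}

theorem isKaehlerBounded_zero (r : Γ₀) : IsKaehlerBounded (k := k) v r 0 :=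
  ⟨0, ![], ![], by simp, fun i => i.elim0⟩

theorem isKaehlerBounded_smul_D {r : Γ₀} {f g : A} (h : v f * v g ≤ r) :
    IsKaehlerBounded v r (f • D k A g) :=
  ⟨1, fun _ => f, fun _ => g, by simp, fun _ => h⟩

theorem IsKaehlerBounded.mono {r s : Γ₀} {ω : Ω[A⁄k]} (hω : IsKaehlerBounded v r ω)
    (hrs : r ≤ s) : IsKaehlerBounded v s ω := by
  obtain ⟨n, f, g, rfl, hle⟩ := hω
  exact ⟨n, f, g, rfl, fun i => (hle i).trans hrs⟩

theorem IsKaehlerBounded.add {r : Γ₀} {ω η : Ω[A⁄k]} (hω : IsKaehlerBounded v r ω)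
    (hη : IsKaehlerBounded v r η) : IsKaehlerBounded v r (ω + η) := by
  obtain ⟨n, f, g, rfl, hle⟩ := hω
  obtain ⟨m, f', g', rfl, hle'⟩ := hη
  refine ⟨n + m, Fin.append f f', Fin.append g g', by simp [Fin.sum_univ_add], ?_⟩
  exact Fin.addCases (fun i => by simpa using hle i) (fun i => by simpa using hle' i)

theorem IsKaehlerBounded.smul {r : Γ₀} {ω : Ω[A⁄k]} (c : A) (hω : IsKaehlerBounded v r ω) :
    IsKaehlerBounded v (v c * r) (c • ω) := by
  obtain ⟨n, f, g, rfl, hle⟩ := hω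
  refine ⟨n, fun i => c * f i, g, by simp [Finset.smul_sum, smul_smul], fun i => ?_⟩
  rw [v.map_mul, mul_assoc]
  exact mul_le_mul_right (hle i) _

variable (k v)

def kaehlerUnitBall : Submodule v.integer (Ω[A⁄k]) where
  carrier := {ω | IsKaehlerBounded v 1 ω}
  add_mem' := IsKaehlerBounded.add
  zero_mem' := isKaehlerBounded_zero 1
  smul_mem' c _ hω := (hω.smul (c : A)).mono ((mul_one _).trans_le c.2)

theorem logDiffSet_subset_kaehlerUnitBall : logDiffSet k v ⊆ kaehlerUnitBall k v := by
  rintro _ (⟨a, ha, rfl⟩ | ⟨g, -, hg, rfl⟩)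
  · show IsKaehlerBounded v 1 (D k A a)
    simpa using isKaehlerBounded_smul_D (k := k) (f := 1) (g := a) (by simpa using ha)
  · refine isKaehlerBounded_smul_D (le_of_eq ?_)
    rw [← v.map_mul, hg.val_inv_mul, v.map_one]

theorem logDiff_le_kaehlerUnitBall : logDiff k v ≤ kaehlerUnitBall k v :=
  Submodule.span_le.mpr (logDiffSet_subset_kaehlerUnitBall k v)

end KaehlerBound

theorem kaehlerSeminorm_le_adicSeminorm_general
    (k : Type) [Field k] (Γ₀ : Type) [LinearOrderedCommGroupWithZero Γ₀]
    (A : Type) [CommRing A] [Algebra k A]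
    (v : Valuation A Γ₀)
    (b : A) (ω : Ω[A⁄k])
    (hω : ∃ η ∈ logDiff k v, ω = b • η) :
    ∃ (n : ℕ) (f g : Fin n → A),
      ω = ∑ i, f i • KaehlerDifferential.D k A (g i) ∧
      ∀ i, v (f i) * v (g i) ≤ v b := by
  obtain ⟨η, hη, rfl⟩ := hω
  simpa [IsKaehlerBounded] using (logDiff_le_kaehlerUnitBall k v hη).smul b

/-- For a local Huber pair `(A, A⁺)` over a field `k`, `b ∈ A⁺`, and
`ω ∈ b • N` (where `N` is the submodule of logarithmic differentials), there is
a finite family `(fᵢ, gᵢ)` of pairs of elements of `A` with `ω = Σ fᵢ • D gᵢ`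
and `v fᵢ * v gᵢ ≤ v b` for all `i`: the inequality `|ω|_Ω ≤ |ω|_ad` between
the Kähler seminorm and the adic seminorm on logarithmic differentials. -/
theorem kaehlerSeminorm_le_adicSeminorm
    (k : Type) [Field k] (Γ₀ : Type) [LinearOrderedCommGroupWithZero Γ₀]
    (A : Type) [CommRing A] [IsLocalRing A] [Algebra k A]
    (v : Valuation A Γ₀)
    (hsupp : v.supp = IsLocalRing.maximalIdeal A)
    (b : A) (hb : v b ≤ 1) (ω : Ω[A⁄k])
    (hω : ∃ η ∈ logDiff k v, ω = b • η) :
    ∃ (n : ℕ) (f g : Fin n → A),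
      ω = ∑ i, f i • KaehlerDifferential.D k A (g i) ∧
      ∀ i, v (f i) * v (g i) ≤ v b :=
  kaehlerSeminorm_le_adicSeminorm_general k Γ₀ A v b ω hω
end
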